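/- Let F be a multiset in PG(3,3) of total multiplicity 43 such that every plane has multiplicity at least 13, and suppose that F has no plane of multiplicity 14 and no plane of multiplicity 15. Then every plane of PG(3,3) has multiplicity congruent to 1 modulo 3 with respect to F. -/

import Mathlib

open scoped BigOperators

noncomputable section

/-- Points of the projective geometry `PG(m-1, q)`, where the underlying
vector space is `F^m`. -/
abbrev PGPt (F : Type) [Field F] (m : ℕ) := Projectivization F (Fin m → F)

/-- The multiplicity of a flat (given as a submodule of `F^m`) with respect to
a multiset of points `K`: the sum of the multiplicities of the points lying in the flat. -/
def fm {F : Type} [Field F] {m : ℕ} (K : PGPt F m → ℕ)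
    (W : Submodule F (Fin m → F)) : ℕ :=
  ∑ᶠ P ∈ {P : PGPt F m | P.submodule ≤ W}, K P

/-- `K` is an `(n, w)`-minihyper in `PG(m-1, q)`: total multiplicity `n`, every
hyperplane (flat of projective dimension `m-2`, i.e. rank `m-1`) has multiplicity
at least `w`, and some hyperplane has multiplicity exactly `w`. -/
def IsMinihyper {F : Type} [Field F] {m : ℕ} (K : PGPt F m → ℕ) (n w : ℕ) : Prop :=
  fm K ⊤ = n ∧
  (∀ H : Submodule F (Fin m → F), Module.finrank F H = m - 1 → w ≤ fm K H) ∧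
  (∃ H : Submodule F (Fin m → F), Module.finrank F H = m - 1 ∧ fm K H = w)

/-- `K` is an `(n, w)`-arc in `PG(m-1, q)`. -/
def IsArc {F : Type} [Field F] {m : ℕ} (K : PGPt F m → ℕ) (n w : ℕ) : Prop :=
  fm K ⊤ = n ∧
  (∀ H : Submodule F (Fin m → F), Module.finrank F H = m - 1 → fm K H ≤ w) ∧
  (∃ H : Submodule F (Fin m → F), Module.finrank F H = m - 1 ∧ fm K H = w)

/-- `v_k = (q^k - 1)/(q - 1)`, the number of points of `PG(k-1, q)`. -/
def vv (q k : ℕ) : ℕ := ∑ i ∈ Finset.range k, q ^ i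

namespace Stmt17Aux

abbrev V3 := Fin 4 → ZMod 3

instance : Finite (PGPt (ZMod 3) 4) := by
  have : Function.Surjective
      (fun v : {v : V3 // v ≠ 0} => Projectivization.mk (ZMod 3) v.1 v.2) := by
    intro P
    exact ⟨⟨P.rep, P.rep_nonzero⟩, P.mk_rep⟩
  exact Finite.of_surjective _ this

noncomputable instance : Fintype (PGPt (ZMod 3) 4) := Fintype.ofFinite _

/-- The linear functional with coefficient vector `a`. -/
def la (a : V3) : V3 →ₗ[ZMod 3] ZMod 3 := ∑ i, a i • LinearMap.proj i

lemma la_apply (a v : V3) : la a v = ∑ i, a i * v i := by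
  simp [la]

lemma la_symm (a v : V3) : la a v = la v a := by
  simp [la_apply, mul_comm]

lemma la_add_apply (a b v : V3) : la (a + b) v = la a v + la b v := by
  simp [la_apply, add_mul, Finset.sum_add_distrib]

lemma la_zero : la (0 : V3) = 0 := by
  ext v; simp [la_apply]

lemma la_single (a : V3) (j : Fin 4) : la a (Pi.single j 1) = a j := by
  rw [la_apply]
  rw [Finset.sum_eq_single j]
  · simp
  · intro i _ hij; simp [Pi.single_apply, hij]
  · simp

lemma la_ne_zero {a : V3} (ha : a ≠ 0) : la a ≠ 0 := by
  obtain ⟨j, hj⟩ : ∃ j, a j ≠ 0 := by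
    by_contra h; push_neg at h; exact ha (funext h)
  intro h
  apply hj
  have := congrArg (fun f : V3 →ₗ[ZMod 3] ZMod 3 => f (Pi.single j 1)) h
  simpa [la_single] using this

lemma la_surjective {a : V3} (ha : a ≠ 0) : Function.Surjective (la a) := by
  have h := la_ne_zero ha
  obtain ⟨v, hv⟩ : ∃ v, la a v ≠ 0 := by
    by_contra hc; push_neg at hc
    exact h (by ext w; simp [hc])
  intro y
  refine ⟨(y * (la a v)⁻¹) • v, ?_⟩
  rw [map_smul, smul_eq_mul, mul_assoc, inv_mul_cancel₀ hv, mul_one]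

lemma finrank_V3 : Module.finrank (ZMod 3) V3 = 4 := Module.finrank_fin_fun _

lemma finrank_ker_la {a : V3} (ha : a ≠ 0) :
    Module.finrank (ZMod 3) (LinearMap.ker (la a)) = 3 := by
  have h1 := LinearMap.finrank_range_add_finrank_ker (la a)
  rw [LinearMap.range_eq_top.mpr (la_surjective ha)] at h1
  rw [finrank_top, finrank_V3, Module.finrank_self] at h1
  omega

/-- Every hyperplane is the kernel of a nonzero dot-product functional. -/
lemma exists_functional {H : Submodule (ZMod 3) V3}
    (hH : Module.finrank (ZMod 3) H = 3) :
    ∃ a : V3, a ≠ 0 ∧ H = LinearMap.ker (la a) := by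
  have hq : Module.finrank (ZMod 3) (V3 ⧸ H) = 1 := by
    have := Submodule.finrank_quotient_add_finrank H
    rw [finrank_V3, hH] at this
    omega
  let b : Module.Basis (Fin 1) (ZMod 3) (V3 ⧸ H) := Module.finBasisOfFinrankEq _ _ hq
  let f : V3 →ₗ[ZMod 3] ZMod 3 := (b.coord 0) ∘ₗ H.mkQ
  have hker : LinearMap.ker f = H := by
    ext x
    simp only [f, LinearMap.mem_ker, LinearMap.comp_apply]
    constructor
    · intro hx
      have hrep : H.mkQ x = b.repr (H.mkQ x) 0 • b 0 := by
        have := b.sum_repr (H.mkQ x)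
        simpa using this.symm
      rw [Module.Basis.coord_apply] at hx
      rw [hx, zero_smul] at hrep
      rwa [← Submodule.Quotient.mk_eq_zero, ← Submodule.mkQ_apply]
    · intro hx
      have : H.mkQ x = 0 := by
        rwa [Submodule.mkQ_apply, Submodule.Quotient.mk_eq_zero]
      rw [this, map_zero]
  have hrw : ∀ v : V3, la (fun i => f (Pi.single i 1)) v = f v := by
    intro v
    rw [la_apply, LinearMap.pi_apply_eq_sum_univ f v]
    refine Finset.sum_congr rfl fun i _ => ?_
    have hs : (Pi.single i 1 : V3) = fun j => if i = j then 1 else 0 := by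
      funext j; simp [Pi.single_apply, eq_comm]
    rw [smul_eq_mul, mul_comm, hs]
  refine ⟨fun i => f (Pi.single i 1), ?_, ?_⟩
  · intro h0
    have hf : f = 0 := by
      apply LinearMap.ext
      intro v
      rw [← hrw v]
      have h1 : ∀ i, f (Pi.single i 1) = 0 := fun i => congrFun h0 i
      rw [la_apply]
      simp only [h1, zero_mul, Finset.sum_const_zero, LinearMap.zero_apply]
    rw [hf, LinearMap.ker_zero] at hker
    rw [← hker] at hH
    rw [finrank_top, finrank_V3] at hH
    omega
  · rw [← hker]
    ext v
    simp only [LinearMap.mem_ker, hrw]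

open Classical in
lemma fm_eq (K : PGPt (ZMod 3) 4 → ℕ) (W : Submodule (ZMod 3) V3) :
    fm K W = ∑ P : PGPt (ZMod 3) 4, if P.submodule ≤ W then K P else 0 := by
  rw [fm, finsum_mem_eq_finite_toFinset_sum _ (Set.toFinite _)]
  rw [← Finset.sum_filter]
  congr 1
  ext P
  simp

lemma submodule_le_ker_iff (P : PGPt (ZMod 3) 4) (f : V3 →ₗ[ZMod 3] ZMod 3) :
    P.submodule ≤ LinearMap.ker f ↔ f P.rep = 0 := by
  rw [Projectivization.submodule_eq, Submodule.span_singleton_le_iff_mem, LinearMap.mem_ker]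

lemma cnt (u w : ZMod 3) :
    ((if u = 0 then 1 else 0) + ((if w = 0 then 1 else 0) + (if w + u = 0 then 1 else 0)
      + (if w + u + u = 0 then 1 else 0)) : ℕ)
      = 1 + 3 * (if u = 0 ∧ w = 0 then 1 else 0) := by
  revert u w; decide

lemma pt_key (u w : ZMod 3) (k : ℕ) :
    (if u = 0 then k else 0) + ((if w = 0 then k else 0) + (if w + u = 0 then k else 0)
      + (if w + u + u = 0 then k else 0))
      = k + 3 * (if u = 0 ∧ w = 0 then k else 0) := by
  have h : ∀ c : Prop, ∀ _ : Decidable c, (if c then k else 0) = k * (if c then 1 else 0) := by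
    intro c hc; split <;> simp
  rw [h _ _, h _ _, h _ _, h _ _, h _ _, ← mul_add, ← mul_add, ← mul_add, cnt u w]
  ring

/-- Key identity: the four plane multiplicities through a "line" sum to the total plus
three times the line multiplicity. -/
lemma key (K : PGPt (ZMod 3) 4 → ℕ) (t s : V3) :
    ∃ c : ℕ, fm K (LinearMap.ker (la t)) + (fm K (LinearMap.ker (la s))
      + fm K (LinearMap.ker (la (s + t))) + fm K (LinearMap.ker (la (s + t + t))))
      = fm K ⊤ + 3 * c := by
  classical
  refine ⟨∑ P : PGPt (ZMod 3) 4,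
    if la t P.rep = 0 ∧ la s P.rep = 0 then K P else 0, ?_⟩
  simp only [fm_eq, submodule_le_ker_iff]
  rw [← Finset.sum_add_distrib, ← Finset.sum_add_distrib, ← Finset.sum_add_distrib,
    Finset.mul_sum, ← Finset.sum_add_distrib]
  refine Finset.sum_congr rfl fun P _ => ?_
  simp only [la_add_apply]
  rw [if_pos le_top]
  exact pt_key (la t P.rep) (la s P.rep) (K P)

lemma card_filter (v : V3) (hv : v ≠ 0) :
    (Finset.univ.filter (fun s : V3 => la s v = 0)).card = 27 := by
  classical
  have h1 : (Finset.univ.filter (fun s : V3 => la s v = 0))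
      = Finset.univ.filter (fun s : V3 => s ∈ LinearMap.ker (la v)) := by
    ext s
    simp [la_symm s v, LinearMap.mem_ker]
  rw [h1, ← Fintype.card_subtype]
  have h2 : Fintype.card (LinearMap.ker (la v)) = 3 ^ 3 := by
    rw [Module.card_eq_pow_finrank (K := ZMod 3), finrank_ker_la hv, ZMod.card]
  simpa using h2

lemma total (K : PGPt (ZMod 3) 4 → ℕ) :
    ∑ s : V3, fm K (LinearMap.ker (la s)) = 27 * fm K ⊤ := by
  classical
  simp only [fm_eq, submodule_le_ker_iff]
  rw [Finset.sum_comm, Finset.mul_sum]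
  refine Finset.sum_congr rfl fun P _ => ?_
  rw [if_pos le_top]
  rw [← Finset.sum_filter, Finset.sum_const, card_filter P.rep P.rep_nonzero]
  simp [mul_comm]

lemma zmod3_add_self (x : ZMod 3) (h : x + x = 0) : x = 0 := by revert x h; decide

lemma zmod3_three (x : ZMod 3) : x + x + x = 0 := by revert x; decide

end Stmt17Aux

open Stmt17Aux

/-- a multiset of total multiplicity 43 in `PG(3,3)` all of whose
planes have multiplicity at least 13, and none of multiplicity 14 or 15, has all
plane multiplicities congruent to 1 mod 3. -/
theorem stmt17 (K : PGPt (ZMod 3) 4 → ℕ) (htot : fm K ⊤ = 43)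
    (hmin : ∀ H : Submodule (ZMod 3) (Fin 4 → ZMod 3),
      Module.finrank (ZMod 3) H = 3 → 13 ≤ fm K H)
    (h14 : ∀ H : Submodule (ZMod 3) (Fin 4 → ZMod 3),
      Module.finrank (ZMod 3) H = 3 → fm K H ≠ 14)
    (h15 : ∀ H : Submodule (ZMod 3) (Fin 4 → ZMod 3),
      Module.finrank (ZMod 3) H = 3 → fm K H ≠ 15) :
    ∀ π : Submodule (ZMod 3) (Fin 4 → ZMod 3),
      Module.finrank (ZMod 3) π = 3 → fm K π % 3 = 1 := by
  classical
  intro π hπ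
  by_contra hbad
  obtain ⟨t, ht0, hπt⟩ := exists_functional hπ
  rw [hπt] at hbad
  -- abbreviation
  have hmmod : fm K (LinearMap.ker (la t)) % 3 ≠ 1 := hbad
  have hm13 : 13 ≤ fm K (LinearMap.ker (la t)) := hmin _ (finrank_ker_la ht0)
  -- facts about t
  have htt0 : t + t ≠ 0 := by
    intro h
    exact ht0 (funext fun i => zmod3_add_self _ (congrFun h i))
  have httne : t ≠ t + t := by
    intro h
    apply ht0
    funext i
    have h1 : t i = t i + t i := congrFun h i
    have h2 : t i = 0 := by
      have h3 : ∀ x : ZMod 3, x = x + x → x = 0 := by decide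
      exact h3 _ h1
    simpa using h2
  have httt : t + t + t = (0 : V3) := funext fun i => zmod3_three (t i)
  -- special plane values
  have hker0 : fm K (LinearMap.ker (la (0 : V3))) = 43 := by
    rw [la_zero, LinearMap.ker_zero]
    exact htot
  have hkertt : LinearMap.ker (la (t + t)) = LinearMap.ker (la t) := by
    ext v
    simp only [LinearMap.mem_ker, la_add_apply]
    constructor
    · intro h; exact zmod3_add_self _ h
    · intro h; rw [h, add_zero]
  -- the summand function
  set f : V3 → ℕ := fun s => fm K (LinearMap.ker (la s)) + fm K (LinearMap.ker (la (s + t)))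
      + fm K (LinearMap.ker (la (s + t + t))) with hf
  -- total value of the sum
  have hT : ∑ s : V3, f s = 3 * (27 * 43) := by
    rw [hf]
    rw [Finset.sum_add_distrib, Finset.sum_add_distrib]
    have e1 : ∑ s : V3, fm K (LinearMap.ker (la (s + t)))
        = ∑ s : V3, fm K (LinearMap.ker (la s)) :=
      Fintype.sum_equiv (Equiv.addRight t) _ _ (fun s => rfl)
    have e2 : ∑ s : V3, fm K (LinearMap.ker (la (s + t + t)))
        = ∑ s : V3, fm K (LinearMap.ker (la s)) := by
      have e3 : ∀ s : V3, fm K (LinearMap.ker (la (s + t + t)))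
          = fm K (LinearMap.ker (la (s + (t + t)))) := by
        intro s; rw [add_assoc]
      simp only [e3]
      exact Fintype.sum_equiv (Equiv.addRight (t + t)) _ _ (fun s => rfl)
    rw [e1, e2]
    have h' := total K
    rw [htot] at h'
    omega
  -- lower bound off the special set
  have hbound : ∀ s : V3, s ≠ 0 → s ≠ t → s ≠ t + t → 43 ≤ f s := by
    intro s h0 h1 h2
    have hs2 : s + t ≠ 0 := by
      intro h
      apply h2
      calc s = s + 0 := by rw [add_zero]
        _ = s + (t + t + t) := by rw [httt]
        _ = s + t + (t + t) := by ring
        _ = 0 + (t + t) := by rw [h]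
        _ = t + t := by rw [zero_add]
    have hs3 : s + t + t ≠ 0 := by
      intro h
      apply h1
      calc s = s + (t + t + t) := by rw [httt, add_zero]
        _ = s + t + t + t := by ring
        _ = 0 + t := by rw [h]
        _ = t := by rw [zero_add]
    obtain ⟨c, hc⟩ := key K t s
    rw [htot] at hc
    have a1 := hmin _ (finrank_ker_la h0)
    have a2 := hmin _ (finrank_ker_la hs2)
    have a3 := hmin _ (finrank_ker_la hs3)
    have b1 := h14 _ (finrank_ker_la h0)
    have b2 := h14 _ (finrank_ker_la hs2)
    have b3 := h14 _ (finrank_ker_la hs3)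
    have c1 := h15 _ (finrank_ker_la h0)
    have c2 := h15 _ (finrank_ker_la hs2)
    have c3 := h15 _ (finrank_ker_la hs3)
    simp only [hf]
    omega
  -- split the sum
  have hsubset : ({0, t, t + t} : Finset V3) ⊆ Finset.univ := Finset.subset_univ _
  have hnm1 : (0 : V3) ∉ ({t, t + t} : Finset V3) := by
    simp only [Finset.mem_insert, Finset.mem_singleton]
    push_neg
    exact ⟨fun h => ht0 h.symm, fun h => htt0 h.symm⟩
  have hnm2 : t ∉ ({t + t} : Finset V3) := by
    simp only [Finset.mem_singleton]
    exact httne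
  have hcard3 : ({0, t, t + t} : Finset V3).card = 3 := by
    rw [Finset.card_insert_of_notMem hnm1, Finset.card_insert_of_notMem hnm2,
      Finset.card_singleton]
  have hcardU : (Finset.univ : Finset V3).card = 81 := by
    simp [Finset.card_univ]
  have hsumS : ∑ s ∈ ({0, t, t + t} : Finset V3), f s
      = 129 + 6 * fm K (LinearMap.ker (la t)) := by
    rw [Finset.sum_insert hnm1, Finset.sum_insert hnm2, Finset.sum_singleton]
    have v1 : f 0 = 43 + 2 * fm K (LinearMap.ker (la t)) := by
      simp only [hf, zero_add]
      rw [hker0, hkertt]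
      ring
    have v2 : f t = 2 * fm K (LinearMap.ker (la t)) + 43 := by
      simp only [hf]
      rw [httt, hkertt, hker0]
      ring
    have v3 : f (t + t) = fm K (LinearMap.ker (la t)) + 43
        + fm K (LinearMap.ker (la t)) := by
      simp only [hf]
      rw [httt, zero_add, hkertt, hker0]
    omega
  have hsplit : ∑ s ∈ Finset.univ \ ({0, t, t + t} : Finset V3), f s
      + ∑ s ∈ ({0, t, t + t} : Finset V3), f s = ∑ s : V3, f s :=
    Finset.sum_sdiff hsubset
  have hcardsd : (Finset.univ \ ({0, t, t + t} : Finset V3)).card = 78 := by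
    rw [Finset.card_sdiff_of_subset hsubset, hcardU, hcard3]
  have hlow : 78 * 43 ≤ ∑ s ∈ Finset.univ \ ({0, t, t + t} : Finset V3), f s := by
    have h' := Finset.card_nsmul_le_sum (Finset.univ \ ({0, t, t + t} : Finset V3)) f 43
      (by
        intro s hs
        simp only [Finset.mem_sdiff, Finset.mem_insert, Finset.mem_singleton,
          Finset.mem_univ, true_and] at hs
        push_neg at hs
        exact hbound s hs.1 hs.2.1 hs.2.2)
    rw [hcardsd] at h'
    simpa using h'
  omega
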